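/- arXiv:2405.10693 — 3 statements merged into one kernel-verified Lean document; each statement's English description precedes it below -/
import Mathlib

section
/- Let p > 2 be a prime and let a₁, a₂ ∈ ℤ_p^×. Then the equation a₁x₁⁴ + a₂x₂⁴ = w² has a nontrivial solution in ℚ_p. (This follows from the Hasse–Weil bound |C(𝔽_p)| ≥ p − 2√p + 1 > 0 for the smooth genus 1 curve a₁x₁⁴ + a₂x₂⁴ = w² over 𝔽_p together with Hensel's lemma.) -/
open Finset

namespace Stmt2Aux

variable {p : ℕ} [Fact p.Prime]

private def J (p : ℕ) [Fact p.Prime] (c : ZMod p) : ℤ :=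
  ∑ t : ZMod p, quadraticChar (ZMod p) t * quadraticChar (ZMod p) (t ^ 2 + c)

lemma rc (hp : 2 < p) : ringChar (ZMod p) ≠ 2 := by
  rw [ZMod.ringChar_zmod_n]; omega

-- (1)
lemma sum_c_mul (hp : 2 < p) (a : ZMod p) (ha : a ≠ 0) :
    ∑ c : ZMod p, quadraticChar (ZMod p) (c * (c + a)) = -1 := by
  set ψ := quadraticChar (ZMod p)
  have h0 : ∀ c : ZMod p, c ≠ 0 → ψ (c * (c + a)) = ψ (1 + a * c⁻¹) := by
    intro c hc
    have : c * (c + a) = c ^ 2 * (1 + a * c⁻¹) := by field_simp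
    rw [this, map_mul, quadraticChar_sq_one' hc, one_mul]
  have step0 : ∑ c : ZMod p, ψ (c * (c + a))
      = ∑ c ∈ Finset.univ.erase (0 : ZMod p), ψ (c * (c + a)) := by
    rw [Finset.sum_erase_eq_sub (Finset.mem_univ (0 : ZMod p))]
    simp [MulChar.map_zero]
  rw [step0]
  have key : ∑ c ∈ Finset.univ.erase (0 : ZMod p), ψ (c * (c + a))
      = ∑ u ∈ Finset.univ.erase (1 : ZMod p), ψ u := by
    refine Finset.sum_nbij' (fun c => 1 + a * c⁻¹) (fun u => a * (u - 1)⁻¹) ?_ ?_ ?_ ?_ ?_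
    · intro c hc
      simp only [Finset.mem_erase, Finset.mem_univ, and_true] at hc ⊢
      intro h
      have : a * c⁻¹ = 0 := by linear_combination h
      rcases mul_eq_zero.mp this with h' | h'
      · exact ha h'
      · exact hc (by simpa using inv_eq_zero.mp h')
    · intro u hu
      simp only [Finset.mem_erase, Finset.mem_univ, and_true] at hu ⊢
      intro h
      rcases mul_eq_zero.mp h with h' | h'
      · exact ha h'
      · exact hu (by
          have := inv_eq_zero.mp h'
          have : u = 1 := by linear_combination this
          exact this)
    · intro c hc
      simp only [Finset.mem_erase, Finset.mem_univ, and_true] at hc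
      field_simp
      rw [show c + a - c = a by ring, div_self ha]
    · intro u hu
      simp only [Finset.mem_erase, Finset.mem_univ, and_true] at hu
      have h1 : u - 1 ≠ 0 := sub_ne_zero.mpr hu
      field_simp
      ring
    · intro c hc
      simp only [Finset.mem_erase, Finset.mem_univ, and_true] at hc
      exact h0 c hc
  rw [key]
  have := quadraticChar_sum_zero (rc hp)
  have h1 : ∑ u ∈ Finset.univ.erase (1 : ZMod p), ψ u
      = (∑ u : ZMod p, ψ u) - ψ 1 := by
    rw [Finset.sum_erase_eq_sub (Finset.mem_univ _)]
  rw [h1, this, map_one]; ring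

-- (2)
lemma sum_shift (hp : 2 < p) (r s : ZMod p) (h : r ≠ s) :
    ∑ c : ZMod p, quadraticChar (ZMod p) ((c + r) * (c + s)) = -1 := by
  set ψ := quadraticChar (ZMod p)
  have e : ∑ c : ZMod p, ψ (c * (c + (s - r)))
      = ∑ c : ZMod p, ψ ((c + r) * (c + s)) := by
    refine Fintype.sum_equiv (Equiv.subRight r) _ _ ?_
    intro x
    have : (x - r) + r = x := by ring
    rw [Equiv.subRight_apply]
    ring_nf
  rw [← e]
  exact sum_c_mul hp (s - r) (sub_ne_zero.mpr (fun hh => h hh.symm))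

-- (3)
lemma sum_sq_self (hp : 2 < p) :
    ∑ t : ZMod p, quadraticChar (ZMod p) (t * t) = (p : ℤ) - 1 := by
  set ψ := quadraticChar (ZMod p)
  have h1 : ∀ t : ZMod p, t ≠ 0 → ψ (t * t) = 1 := by
    intro t ht
    have : t * t = t ^ 2 := by ring
    rw [this]; exact quadraticChar_sq_one' ht
  have step0 : ∑ t : ZMod p, ψ (t * t)
      = ∑ t ∈ Finset.univ.erase (0 : ZMod p), ψ (t * t) := by
    rw [Finset.sum_erase_eq_sub (Finset.mem_univ (0 : ZMod p))]
    simp [MulChar.map_zero]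
  rw [step0, Finset.sum_congr rfl (fun t ht => h1 t (Finset.mem_erase.mp ht).1)]
  simp only [Finset.sum_const, nsmul_eq_mul, mul_one, Finset.card_erase_of_mem
    (Finset.mem_univ _), Finset.card_univ, ZMod.card]
  have : 1 ≤ p := by omega
  push_cast [this]
  ring

-- (7) sum over squares
lemma sum_comp_sq (hp : 2 < p) (f : ZMod p → ℤ) :
    ∑ x : ZMod p, f (x ^ 2) = ∑ t : ZMod p, (1 + quadraticChar (ZMod p) t) * f t := by
  set ψ := quadraticChar (ZMod p)
  have fib : ∑ t : ZMod p, ∑ x ∈ Finset.univ.filter (fun x : ZMod p => x ^ 2 = t), f (x ^ 2)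
      = ∑ x : ZMod p, f (x ^ 2) :=
    Finset.sum_fiberwise_of_maps_to (fun x _ => Finset.mem_univ (x ^ 2)) _
  rw [← fib]
  refine Finset.sum_congr rfl ?_
  intro t _
  have hconst : ∑ x ∈ Finset.univ.filter (fun x : ZMod p => x ^ 2 = t), f (x ^ 2)
      = ∑ x ∈ Finset.univ.filter (fun x : ZMod p => x ^ 2 = t), f t := by
    refine Finset.sum_congr rfl ?_
    intro x hx
    rw [(Finset.mem_filter.mp hx).2]
  rw [hconst, Finset.sum_const, nsmul_eq_mul]
  congr 1
  have := quadraticChar_card_sqrts (rc hp) t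
  have hset : {x : ZMod p | x ^ 2 = t}.toFinset
      = Finset.univ.filter (fun x : ZMod p => x ^ 2 = t) := by
    ext x; simp
  rw [hset] at this
  rw [this]; ring

-- (5)
lemma J_mul_sq (hp : 2 < p) (e c : ZMod p) (he : e ≠ 0) :
    J p (e ^ 2 * c) = quadraticChar (ZMod p) e * J p c := by
  set ψ := quadraticChar (ZMod p)
  unfold J
  symm
  rw [Finset.mul_sum]
  refine Fintype.sum_equiv (Equiv.mulLeft₀ e he) _ _ ?_
  intro s
  rw [Equiv.mulLeft₀_apply]
  have h1 : (e * s) ^ 2 + e ^ 2 * c = e ^ 2 * (s ^ 2 + c) := by ring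
  rw [h1, map_mul, map_mul, quadraticChar_sq_one' he]
  show ψ e * (ψ s * ψ (s ^ 2 + c)) = ψ e * ψ s * (1 * ψ (s ^ 2 + c))
  ring

lemma two_ne_zero' (hp : 2 < p) : (2 : ZMod p) ≠ 0 := by
  intro h
  have : ((2 : ℕ) : ZMod p) = 0 := by exact_mod_cast h
  rw [ZMod.natCast_eq_zero_iff] at this
  have := Nat.le_of_dvd (by norm_num) this
  omega

-- (4)
lemma J_moment (hp : 2 < p) :
    ∑ c : ZMod p, (J p c) ^ 2 ≤ 2 * ((p : ℤ) * ((p : ℤ) - 1)) := by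
  set ψ := quadraticChar (ZMod p) with hψ
  have expand : ∀ c : ZMod p, (J p c) ^ 2
      = ∑ t : ZMod p, ∑ u : ZMod p, (ψ t * ψ u) * ψ ((c + t ^ 2) * (c + u ^ 2)) := by
    intro c
    rw [J, sq, Finset.sum_mul_sum]
    refine Finset.sum_congr rfl fun t _ => Finset.sum_congr rfl fun u _ => ?_
    rw [map_mul, add_comm c (t ^ 2), add_comm c (u ^ 2)]
    ring
  have swap : ∑ c : ZMod p, (J p c) ^ 2
      = ∑ t : ZMod p, ∑ u : ZMod p, (ψ t * ψ u) * ∑ c : ZMod p, ψ ((c + t ^ 2) * (c + u ^ 2)) := by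
    rw [Finset.sum_congr rfl fun c _ => expand c, Finset.sum_comm]
    refine Finset.sum_congr rfl fun t _ => ?_
    rw [Finset.sum_comm]
    exact Finset.sum_congr rfl fun u _ => (Finset.mul_sum _ _ _).symm
  have Ieq : ∀ t u : ZMod p, t ^ 2 = u ^ 2 →
      ∑ c : ZMod p, ψ ((c + t ^ 2) * (c + u ^ 2)) = (p : ℤ) - 1 := by
    intro t u h
    rw [h]
    have e : ∑ c : ZMod p, ψ (c * c) = ∑ c : ZMod p, ψ ((c + u ^ 2) * (c + u ^ 2)) := by
      refine Fintype.sum_equiv (Equiv.subRight (u ^ 2)) _ _ ?_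
      intro x
      rw [Equiv.subRight_apply]
      ring_nf
    rw [← e]
    exact sum_sq_self hp
  have Ine : ∀ t u : ZMod p, t ^ 2 ≠ u ^ 2 →
      ∑ c : ZMod p, ψ ((c + t ^ 2) * (c + u ^ 2)) = -1 := fun t u h => sum_shift hp _ _ h
  have term_eq : ∀ t u : ZMod p, (ψ t * ψ u) * (∑ c : ZMod p, ψ ((c + t ^ 2) * (c + u ^ 2)))
      = (p : ℤ) * (if u ^ 2 = t ^ 2 then ψ t * ψ u else 0) - ψ t * ψ u := by
    intro t u
    by_cases h : t ^ 2 = u ^ 2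
    · rw [Ieq t u h, if_pos h.symm]; ring
    · rw [Ine t u h, if_neg (fun hh => h hh.symm)]; ring
  have filt : ∀ t : ZMod p,
      ∑ u : ZMod p, (if u ^ 2 = t ^ 2 then ψ t * ψ u else 0) = ψ (t * t) + ψ (-(t * t)) := by
    intro t
    rw [← Finset.sum_filter]
    have hfil : Finset.univ.filter (fun u : ZMod p => u ^ 2 = t ^ 2) = {t, -t} := by
      ext u
      simp only [Finset.mem_filter, Finset.mem_univ, true_and, Finset.mem_insert,
        Finset.mem_singleton]
      constructor
      · intro h
        have h2 : (u - t) * (u + t) = 0 := by linear_combination h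
        rcases mul_eq_zero.mp h2 with h' | h'
        · exact Or.inl (sub_eq_zero.mp h')
        · exact Or.inr (eq_neg_of_add_eq_zero_left h')
      · rintro (rfl | rfl) <;> ring
    rw [hfil]
    by_cases ht : t = 0
    · subst ht
      simp [MulChar.map_zero]
    · have hne : t ≠ -t := by
        intro h
        have h2 : (2 : ZMod p) * t = 0 := by linear_combination h
        rcases mul_eq_zero.mp h2 with h' | h'
        · exact two_ne_zero' hp h'
        · exact ht h'
      rw [Finset.sum_pair hne, ← map_mul, ← map_mul]
      have : t * -t = -(t * t) := by ring
      rw [this]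
  have inner : ∀ t : ZMod p,
      ∑ u : ZMod p, ((ψ t * ψ u) * ∑ c : ZMod p, ψ ((c + t ^ 2) * (c + u ^ 2)))
      = (p : ℤ) * (ψ (t * t) + ψ (-(t * t))) := by
    intro t
    rw [Finset.sum_congr rfl fun u _ => term_eq t u, Finset.sum_sub_distrib, ← Finset.mul_sum,
      filt t, ← Finset.mul_sum, quadraticChar_sum_zero (rc hp)]
    ring
  rw [swap, Finset.sum_congr rfl fun t _ => inner t, ← Finset.mul_sum]
  have neg_split : ∀ t : ZMod p, ψ (-(t * t)) = ψ (-1) * ψ (t * t) := by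
    intro t
    rw [← map_mul]
    congr 1
    ring
  have : ∑ t : ZMod p, (ψ (t * t) + ψ (-(t * t)))
      = (1 + ψ (-1)) * ((p : ℤ) - 1) := by
    rw [Finset.sum_congr rfl fun t _ => by rw [neg_split t], Finset.sum_add_distrib,
      ← Finset.mul_sum, sum_sq_self hp]
    ring
  rw [this]
  have hd : ψ (-1) = 1 ∨ ψ (-1) = -1 := quadraticChar_dichotomy (by
    intro h
    exact one_ne_zero (neg_eq_zero.mp h))
  have hp1 : (1 : ℤ) ≤ (p : ℤ) := by exact_mod_cast Nat.one_le_of_lt hp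
  rcases hd with h | h <;> rw [h] <;> nlinarith

-- (6)
lemma J_sq_le (hp : 2 < p) (c : ZMod p) (hc : c ≠ 0) : (J p c) ^ 2 ≤ 4 * (p : ℤ) := by
  classical
  set ψ := quadraticChar (ZMod p)
  have hval : ∀ e : ZMod p, e ≠ 0 → (J p (e ^ 2 * c)) ^ 2 = (J p c) ^ 2 := by
    intro e he
    rw [J_mul_sq hp e c he, mul_pow, quadraticChar_sq_one he, one_mul]
  have hsum : ∑ e ∈ Finset.univ.erase (0 : ZMod p), (J p (e ^ 2 * c)) ^ 2
      = ((p : ℤ) - 1) * (J p c) ^ 2 := by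
    rw [Finset.sum_congr rfl fun e he => hval e (Finset.mem_erase.mp he).1,
      Finset.sum_const, nsmul_eq_mul, Finset.card_erase_of_mem (Finset.mem_univ _),
      Finset.card_univ, ZMod.card]
    have : 1 ≤ p := by omega
    push_cast [this]
    ring
  have hcomp : ∑ e ∈ Finset.univ.erase (0 : ZMod p), (J p (e ^ 2 * c)) ^ 2
      ≤ 2 * ∑ b : ZMod p, (J p b) ^ 2 := by
    rw [Finset.sum_comp (fun b => (J p b) ^ 2) (fun e : ZMod p => e ^ 2 * c)]
    have hcard : ∀ b ∈ (Finset.univ.erase (0 : ZMod p)).image (fun e : ZMod p => e ^ 2 * c),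
        ((Finset.univ.erase (0 : ZMod p)).filter
          (fun e : ZMod p => e ^ 2 * c = b)).card ≤ 2 := by
      intro b hb
      obtain ⟨a, ha, hab⟩ := Finset.mem_image.mp hb
      have : (Finset.univ.erase (0 : ZMod p)).filter (fun e : ZMod p => e ^ 2 * c = b)
          ⊆ {a, -a} := by
        intro x hx
        obtain ⟨hx1, hx2⟩ := Finset.mem_filter.mp hx
        have h2 : x ^ 2 * c = a ^ 2 * c := by rw [hx2, hab]
        have h3 : x ^ 2 = a ^ 2 := mul_right_cancel₀ hc h2
        have h4 : (x - a) * (x + a) = 0 := by linear_combination h3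
        simp only [Finset.mem_insert, Finset.mem_singleton]
        rcases mul_eq_zero.mp h4 with h' | h'
        · exact Or.inl (sub_eq_zero.mp h')
        · exact Or.inr (eq_neg_of_add_eq_zero_left h')
      calc _ ≤ ({a, -a} : Finset (ZMod p)).card := Finset.card_le_card this
        _ ≤ 2 := Finset.card_insert_le _ _ |>.trans (by simp)
    calc ∑ b ∈ (Finset.univ.erase (0 : ZMod p)).image (fun e : ZMod p => e ^ 2 * c),
          ((Finset.univ.erase (0 : ZMod p)).filter (fun e : ZMod p => e ^ 2 * c = b)).card
            • (J p b) ^ 2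
        ≤ ∑ b ∈ (Finset.univ.erase (0 : ZMod p)).image (fun e : ZMod p => e ^ 2 * c),
            2 * (J p b) ^ 2 := by
          refine Finset.sum_le_sum ?_
          intro b hb
          rw [nsmul_eq_mul]
          have := hcard b hb
          have hnn : (0 : ℤ) ≤ (J p b) ^ 2 := sq_nonneg _
          have : ((((Finset.univ.erase (0 : ZMod p)).filter
              (fun e : ZMod p => e ^ 2 * c = b)).card : ℤ)) ≤ 2 := by exact_mod_cast this
          nlinarith
      _ ≤ 2 * ∑ b : ZMod p, (J p b) ^ 2 := by
          rw [← Finset.mul_sum]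
          have : ∑ b ∈ (Finset.univ.erase (0 : ZMod p)).image (fun e : ZMod p => e ^ 2 * c),
              (J p b) ^ 2 ≤ ∑ b : ZMod p, (J p b) ^ 2 :=
            Finset.sum_le_sum_of_subset_of_nonneg (Finset.subset_univ _)
              (fun b _ _ => sq_nonneg _)
          nlinarith
  have := J_moment (p := p) hp
  have hp1 : (2 : ℤ) ≤ (p : ℤ) - 1 := by
    have : 3 ≤ p := hp
    have : (3 : ℤ) ≤ (p : ℤ) := by exact_mod_cast this
    linarith
  nlinarith [hsum, hcomp, this]

-- (8a)
lemma sum_sq_add (hp : 2 < p) (c : ZMod p) (hc : c ≠ 0) :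
    ∑ t : ZMod p, quadraticChar (ZMod p) (t ^ 2 + c) = -1 := by
  set ψ := quadraticChar (ZMod p)
  rw [sum_comp_sq hp (fun t => ψ (t + c))]
  have shift : ∑ t : ZMod p, ψ (t + c) = 0 := by
    rw [← quadraticChar_sum_zero (rc hp)]
    exact Fintype.sum_equiv (Equiv.addRight c) _ _ (fun x => rfl)
  have expand : ∑ t : ZMod p, (1 + ψ t) * ψ (t + c)
      = (∑ t : ZMod p, ψ (t + c)) + ∑ t : ZMod p, ψ (t * (t + c)) := by
    rw [← Finset.sum_add_distrib]
    refine Finset.sum_congr rfl fun t _ => ?_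
    rw [map_mul]
    ring
  rw [expand, shift, sum_c_mul hp c hc]
  ring

-- (8)
lemma quartic_sum (hp : 2 < p) (c : ZMod p) (hc : c ≠ 0) :
    ∑ x : ZMod p, quadraticChar (ZMod p) (x ^ 4 + c) = -1 + J p c := by
  set ψ := quadraticChar (ZMod p)
  have h4 : ∀ x : ZMod p, ψ (x ^ 4 + c) = (fun t => ψ (t ^ 2 + c)) (x ^ 2) := by
    intro x
    simp only
    congr 2
    ring
  rw [Finset.sum_congr rfl fun x _ => h4 x, sum_comp_sq hp (fun t => ψ (t ^ 2 + c))]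
  have expand : ∑ t : ZMod p, (1 + ψ t) * ψ (t ^ 2 + c)
      = (∑ t : ZMod p, ψ (t ^ 2 + c)) + J p c := by
    rw [J, ← Finset.sum_add_distrib]
    refine Finset.sum_congr rfl fun t _ => ?_
    ring
  rw [expand, sum_sq_add hp c hc]

lemma key3 : ∀ (α β : ZMod 3), α ≠ 0 → β ≠ 0 →
    (∃ x, IsSquare (α * x ^ 4 + β)) ∨ (∃ x, IsSquare (β * x ^ 4 + α)) := by decide

lemma key5 : ∀ (α β : ZMod 5), α ≠ 0 → β ≠ 0 →
    (∃ x, IsSquare (α * x ^ 4 + β)) ∨ (∃ x, IsSquare (β * x ^ 4 + α)) := by decide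

-- (9)
lemma key_exists (hp : 2 < p) (α β : ZMod p) (hα : α ≠ 0) (hβ : β ≠ 0) :
    (∃ x : ZMod p, IsSquare (α * x ^ 4 + β)) ∨ (∃ x : ZMod p, IsSquare (β * x ^ 4 + α)) := by
  rcases lt_or_ge p 7 with hlt | hge
  · have h35 : p = 3 ∨ p = 5 := by
      interval_cases p
      · left; rfl
      · exfalso; exact (by norm_num : ¬ Nat.Prime 4) Fact.out
      · right; rfl
      · exfalso; exact (by norm_num : ¬ Nat.Prime 6) Fact.out
    rcases h35 with rfl | rfl
    · exact key3 α β hα hβ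
    · exact key5 α β hα hβ
  left
  by_contra h
  push_neg at h
  set ψ := quadraticChar (ZMod p)
  have hψ : ∀ x : ZMod p, ψ (α * x ^ 4 + β) = -1 := fun x =>
    quadraticChar_neg_one_iff_not_isSquare.mpr (h x)
  have hsum : ∑ x : ZMod p, ψ (α * x ^ 4 + β) = -(p : ℤ) := by
    rw [Finset.sum_congr rfl fun x _ => hψ x, Finset.sum_const, nsmul_eq_mul,
      Finset.card_univ, ZMod.card]
    ring
  set c : ZMod p := α⁻¹ * β with hcdef
  have hc : c ≠ 0 := mul_ne_zero (inv_ne_zero hα) hβ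
  have hfact : ∀ x : ZMod p, α * x ^ 4 + β = α * (x ^ 4 + c) := by
    intro x
    rw [hcdef]
    field_simp
  have hsum2 : ∑ x : ZMod p, ψ (α * x ^ 4 + β) = ψ α * (-1 + J p c) := by
    rw [← quartic_sum hp c hc, Finset.mul_sum]
    exact Finset.sum_congr rfl fun x _ => by rw [hfact x, map_mul]
  have heq : ψ α * (-1 + J p c) = -(p : ℤ) := by rw [← hsum2, hsum]
  have hsq : (-1 + J p c) ^ 2 = (p : ℤ) ^ 2 := by
    have := congrArg (· ^ 2) heq
    rw [mul_pow, quadraticChar_sq_one hα, one_mul] at this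
    simpa using this
  have hJ : (J p c) ^ 2 ≤ 4 * (p : ℤ) := J_sq_le hp c hc
  -- from hsq : J = 1 + p or J = 1 - p
  have hcases : J p c = 1 + (p : ℤ) ∨ J p c = 1 - (p : ℤ) := by
    have h0 : ((-1 + J p c) - (p : ℤ)) * ((-1 + J p c) + (p : ℤ)) = 0 := by nlinarith [hsq]
    rcases mul_eq_zero.mp h0 with h' | h'
    · left; linarith
    · right; linarith
  have hple : (p : ℤ) ≤ 5 := by
    rcases hcases with h' | h' <;> nlinarith [hJ, sq_nonneg ((p : ℤ) - 1)]
  have : (7 : ℤ) ≤ (p : ℤ) := by exact_mod_cast hge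
  linarith

open PadicInt in
lemma toZMod_natCast_val (r : ZMod p) :
    PadicInt.toZMod ((r.val : ℤ_[p])) = r := by
  haveI : NeZero p := ⟨(Fact.out : p.Prime).ne_zero⟩
  rw [map_natCast]
  exact ZMod.natCast_rightInverse r

lemma norm_lt_one_of (z : ℤ_[p]) (h : PadicInt.toZMod z = 0) : ‖z‖ < 1 := by
  rw [PadicInt.norm_lt_one_iff_dvd]
  have hker : z ∈ RingHom.ker (PadicInt.toZMod (p := p)) := by
    rw [RingHom.mem_ker]; exact h
  rwa [PadicInt.ker_toZMod, PadicInt.maximalIdeal_eq_span_p, Ideal.mem_span_singleton] at hker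

lemma isUnit_of_toZMod_ne_zero (z : ℤ_[p]) (h : PadicInt.toZMod z ≠ 0) : IsUnit z := by
  rw [PadicInt.isUnit_iff]
  by_contra hne
  have hlt : ‖z‖ < 1 := lt_of_le_of_ne (PadicInt.norm_le_one z) hne
  rw [PadicInt.norm_lt_one_iff_dvd] at hlt
  apply h
  have hker : z ∈ RingHom.ker (PadicInt.toZMod (p := p)) := by
    rw [PadicInt.ker_toZMod, PadicInt.maximalIdeal_eq_span_p, Ideal.mem_span_singleton]
    exact hlt
  rwa [RingHom.mem_ker] at hker

lemma toZMod_ne_zero_of_isUnit (z : ℤ_[p]) (h : IsUnit z) : PadicInt.toZMod z ≠ 0 := by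
  intro h0
  have := norm_lt_one_of z h0
  rw [PadicInt.isUnit_iff.mp h] at this
  exact lt_irrefl _ this

lemma four_unit (hp : 2 < p) : IsUnit (4 : ℤ_[p]) := by
  apply isUnit_of_toZMod_ne_zero
  rw [map_ofNat]
  intro h
  have : ((4 : ℕ) : ZMod p) = 0 := by exact_mod_cast h
  rw [ZMod.natCast_eq_zero_iff] at this
  have h2 : p ∣ 2 ^ 2 := by norm_num at this ⊢; exact this
  have := Nat.Prime.dvd_of_dvd_pow (Fact.out : p.Prime) h2
  have := Nat.le_of_dvd (by norm_num) this
  omega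

lemma two_unit (hp : 2 < p) : IsUnit (2 : ℤ_[p]) := by
  apply isUnit_of_toZMod_ne_zero
  rw [map_ofNat]
  intro h
  have : ((2 : ℕ) : ZMod p) = 0 := by exact_mod_cast h
  rw [ZMod.natCast_eq_zero_iff] at this
  have := Nat.le_of_dvd (by norm_num) this
  omega

open Polynomial in
lemma padic_lift (hp : 2 < p) (a₁ a₂ : ℤ_[p]) (h1 : IsUnit a₁) (h2 : IsUnit a₂)
    (hkey : ∃ x : ZMod p, IsSquare (PadicInt.toZMod a₁ * x ^ 4 + PadicInt.toZMod a₂)) :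
    ∃ x w : ℤ_[p], a₁ * x ^ 4 + a₂ = w ^ 2 := by
  obtain ⟨xb, hsq⟩ := hkey
  set α := PadicInt.toZMod a₁ with hαdef
  set β := PadicInt.toZMod a₂ with hβdef
  have hβ : β ≠ 0 := toZMod_ne_zero_of_isUnit a₂ h2
  set x₀ : ℤ_[p] := ((xb.val : ℕ) : ℤ_[p]) with hx₀def
  have hx₀ : PadicInt.toZMod x₀ = xb := toZMod_natCast_val xb
  by_cases hv : α * xb ^ 4 + β = 0
  · -- lift a root of a₁ X^4 + a₂
    have hxb : xb ≠ 0 := by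
      intro h0
      rw [h0] at hv
      rw [zero_pow (by norm_num : (4:ℕ) ≠ 0), mul_zero, zero_add] at hv
      exact hβ hv
    set F : Polynomial ℤ_[p] := C a₁ * X ^ 4 + C a₂ with hF
    have hevalF : F.eval x₀ = a₁ * x₀ ^ 4 + a₂ := by simp [hF]
    have hder : F.derivative = C a₁ * (C 4 * X ^ 3) := by
      rw [hF]
      simp [derivative_X_pow]
      left; rw [← C_1, ← C_add]; norm_num
    have hevald : F.derivative.eval x₀ = a₁ * (4 * x₀ ^ 3) := by
      rw [hder]; simp
    have hnorm1 : ‖F.derivative.eval x₀‖ = 1 := by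
      rw [hevald]
      apply PadicInt.isUnit_iff.mp
      exact (h1.mul ((four_unit hp).mul
        ((isUnit_of_toZMod_ne_zero x₀ (by rw [hx₀]; exact hxb)).pow 3)))
    have hnorm0 : ‖F.eval x₀‖ < 1 := by
      apply norm_lt_one_of
      rw [hevalF, map_add, map_mul, map_pow, hx₀, ← hαdef, ← hβdef]
      exact hv
    have hh : ‖F.eval x₀‖ < ‖F.derivative.eval x₀‖ ^ 2 := by
      rw [hnorm1]; simpa using hnorm0
    obtain ⟨z, hz, -⟩ := hensels_lemma hh
    refine ⟨z, 0, ?_⟩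
    have : a₁ * z ^ 4 + a₂ = 0 := by
      have := hz
      simpa [hF] using this
    rw [this]
    ring
  · -- the value is a nonzero square : lift a square root
    obtain ⟨ρ, hρ⟩ := hsq
    have hρ0 : ρ ≠ 0 := by
      intro h0
      rw [h0, mul_zero] at hρ
      exact hv hρ
    set r : ℤ_[p] := ((ρ.val : ℕ) : ℤ_[p]) with hrdef
    have hr : PadicInt.toZMod r = ρ := toZMod_natCast_val ρ
    set v : ℤ_[p] := a₁ * x₀ ^ 4 + a₂ with hvdef
    set F : Polynomial ℤ_[p] := X ^ 2 - C v with hF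
    have hevalF : F.eval r = r ^ 2 - v := by simp [hF]
    have hder : F.derivative = C 2 * X := by
      simp [hF, derivative_X_pow]
      rw [← C_1, ← C_add]; norm_num
    have hevald : F.derivative.eval r = 2 * r := by rw [hder]; simp
    have hnorm1 : ‖F.derivative.eval r‖ = 1 := by
      rw [hevald]
      exact PadicInt.isUnit_iff.mp ((two_unit hp).mul
        (isUnit_of_toZMod_ne_zero r (by rw [hr]; exact hρ0)))
    have hnorm0 : ‖F.eval r‖ < 1 := by
      apply norm_lt_one_of
      rw [hevalF, map_sub, map_pow, hr, hvdef, map_add, map_mul, map_pow, hx₀,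
        ← hαdef, ← hβdef]
      linear_combination -hρ
    have hh : ‖F.eval r‖ < ‖F.derivative.eval r‖ ^ 2 := by
      rw [hnorm1]; simpa using hnorm0
    obtain ⟨z, hz, -⟩ := hensels_lemma hh
    refine ⟨x₀, z, ?_⟩
    have : z ^ 2 - v = 0 := by simpa [hF] using hz
    rw [hvdef] at this
    linear_combination -this

end Stmt2Aux

/-- Let `p > 2` be a prime and `a₁, a₂ ∈ ℤ_p^×`. Then
`a₁x₁⁴ + a₂x₂⁴ = w²` has a nontrivial solution in `ℚ_p`. -/
theorem stmt2 (p : ℕ) [Fact p.Prime] (hp : 2 < p) (a₁ a₂ : ℤ_[p])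
    (h1 : IsUnit a₁) (h2 : IsUnit a₂) :
    ∃ x₁ x₂ w : ℚ_[p], (x₁, x₂, w) ≠ (0, 0, 0) ∧
      (a₁ : ℚ_[p]) * x₁ ^ 4 + (a₂ : ℚ_[p]) * x₂ ^ 4 = w ^ 2 := by
  have hα : PadicInt.toZMod a₁ ≠ 0 := Stmt2Aux.toZMod_ne_zero_of_isUnit a₁ h1
  have hβ : PadicInt.toZMod a₂ ≠ 0 := Stmt2Aux.toZMod_ne_zero_of_isUnit a₂ h2
  rcases Stmt2Aux.key_exists hp _ _ hα hβ with hk | hk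
  · obtain ⟨x, w, hxw⟩ := Stmt2Aux.padic_lift hp a₁ a₂ h1 h2 hk
    refine ⟨(x : ℚ_[p]), 1, (w : ℚ_[p]), ?_, ?_⟩
    · simp [Prod.ext_iff]
    · have h := congrArg (fun z : ℤ_[p] => (z : ℚ_[p])) hxw
      push_cast at h
      rw [one_pow, mul_one]
      linear_combination h
  · obtain ⟨x, w, hxw⟩ := Stmt2Aux.padic_lift hp a₂ a₁ h2 h1 hk
    refine ⟨1, (x : ℚ_[p]), (w : ℚ_[p]), ?_, ?_⟩
    · simp [Prod.ext_iff]
    · have h := congrArg (fun z : ℤ_[p] => (z : ℚ_[p])) hxw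
      push_cast at h
      rw [one_pow, mul_one]
      linear_combination h
end

section
/- Let p ≡ 3 (mod 4) be an odd prime and a₀, a₁ ∈ ℤ_p^× with −a₀/a₁ a square in ℤ_p^×. Then either −a₀/a₁ or a₀/a₁ (equivalently, −(−a₀/a₁)) is a fourth power in ℚ_p^×. In particular, if additionally a₂ ∈ ℤ_p^×, the equation a₀x₀⁴ + a₁x₁⁴ + a₂x₂⁴ = w² has a nontrivial ℚ_p-solution. -/
open Polynomial

lemma aux_sqrt (p : ℕ) [Fact p.Prime] (hp : p % 4 = 3) (u : ℤ_[p]) (hu : IsUnit u) :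
    ∃ t : ℤ_[p], t ^ 2 = u ∨ t ^ 2 = -u := by
  have hp2 : (p : ℕ) ≠ 2 := by omega
  have hubar : (PadicInt.toZMod u : ZMod p) ≠ 0 := (hu.map PadicInt.toZMod).ne_zero
  have hcase : IsSquare (PadicInt.toZMod u) ∨ IsSquare (-(PadicInt.toZMod u)) := by
    by_contra h
    push_neg at h
    have hm1 : ¬ IsSquare (-1 : ZMod p) := by
      rw [ZMod.exists_sq_eq_neg_one_iff]; simp [hp]
    have c1 := (quadraticChar_neg_one_iff_not_isSquare).2 h.1
    have c2 := (quadraticChar_neg_one_iff_not_isSquare).2 h.2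
    have cm1 := (quadraticChar_neg_one_iff_not_isSquare).2 hm1
    have : quadraticChar (ZMod p) (-(PadicInt.toZMod u)) =
        quadraticChar (ZMod p) (-1) * quadraticChar (ZMod p) (PadicInt.toZMod u) := by
      rw [← map_mul]; ring_nf
    rw [c1, c2, cm1] at this
    norm_num at this
  -- pick w = u or -u which is a square mod p
  obtain ⟨w, hwu, hwunit, v, hv⟩ :
      ∃ w : ℤ_[p], (w = u ∨ w = -u) ∧ IsUnit w ∧ ∃ v : ZMod p, PadicInt.toZMod w = v * v := by
    rcases hcase with ⟨v, hv⟩ | ⟨v, hv⟩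
    · exact ⟨u, Or.inl rfl, hu, v, hv⟩
    · exact ⟨-u, Or.inr rfl, hu.neg, v, by rw [map_neg, hv]⟩
  -- lift v to ℤ_[p]
  set a : ℤ_[p] := ((v.val : ℕ) : ℤ_[p]) with ha
  have hta : PadicInt.toZMod a = v := by
    rw [ha, map_natCast, ZMod.natCast_val, ZMod.cast_id]
  have hvne : v ≠ 0 := by
    intro h; rw [h, mul_zero] at hv
    exact (hwunit.map PadicInt.toZMod).ne_zero hv
  have haunit : IsUnit a := by
    by_contra h
    have : a ∈ IsLocalRing.maximalIdeal ℤ_[p] := by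
      simpa using h
    rw [← PadicInt.ker_toZMod, RingHom.mem_ker, hta] at this
    exact hvne this
  -- Hensel
  set F : Polynomial ℤ_[p] := X ^ 2 - C w with hF
  have hFa : PadicInt.toZMod (F.eval a) = 0 := by
    simp [hF, hta, hv]
    ring
  have hFamem : F.eval a ∈ IsLocalRing.maximalIdeal ℤ_[p] := by
    rw [← PadicInt.ker_toZMod, RingHom.mem_ker]; exact hFa
  have hFanorm : ‖F.eval a‖ < 1 := by
    have := (IsLocalRing.mem_maximalIdeal _).mp hFamem
    rwa [mem_nonunits_iff, PadicInt.not_isUnit_iff] at this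
  have h2 : IsUnit (2 : ℤ_[p]) := by
    by_contra h
    have hm : (2 : ℤ_[p]) ∈ IsLocalRing.maximalIdeal ℤ_[p] := by simpa using h
    rw [← PadicInt.ker_toZMod, RingHom.mem_ker, map_ofNat] at hm
    have hdvd : p ∣ 2 := (ZMod.natCast_eq_zero_iff _ _).mp (by exact_mod_cast hm)
    have := Nat.le_of_dvd (by norm_num) hdvd
    have := (Fact.out : p.Prime).two_le
    omega
  have hderiv : F.derivative.eval a = 2 * a := by
    simp [hF]
    norm_num
  have hdnorm : ‖F.derivative.eval a‖ = 1 := by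
    rw [hderiv, norm_mul, PadicInt.isUnit_iff.mp h2, PadicInt.isUnit_iff.mp haunit]
    norm_num
  have hnorm : ‖F.eval a‖ < ‖F.derivative.eval a‖ ^ 2 := by
    rw [hdnorm]; simpa using hFanorm
  obtain ⟨z, hz, -⟩ := hensels_lemma hnorm
  refine ⟨z, ?_⟩
  have hz2 : z ^ 2 = w := by
    have h' : z ^ 2 - w = 0 := by simpa [hF] using hz
    exact sub_eq_zero.mp h' 
  rcases hwu with h | h
  · exact Or.inl (by rw [hz2, h])
  · exact Or.inr (by rw [hz2, h])

/-- Let `p ≡ 3 (mod 4)` be a prime and `a₀, a₁ ∈ ℤ_p^×` with `−a₀/a₁`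
a square in `ℤ_p^×`. Then `−a₀/a₁` or `a₀/a₁` is a fourth power in `ℚ_p^×`; in
particular if also `a₂ ∈ ℤ_p^×`, the equation `a₀x₀⁴+a₁x₁⁴+a₂x₂⁴ = w²` has a
nontrivial `ℚ_p`-solution. -/
theorem stmt4 (p : ℕ) [Fact p.Prime] (hp : p % 4 = 3) (a₀ a₁ : ℤ_[p])
    (h0 : IsUnit a₀) (h1 : IsUnit a₁)
    (hsq : ∃ s : ℤ_[p], IsUnit s ∧ s ^ 2 * a₁ = -a₀) :
    ((∃ γ : ℚ_[p], γ ^ 4 = -(a₀ : ℚ_[p]) / (a₁ : ℚ_[p])) ∨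
      (∃ γ : ℚ_[p], γ ^ 4 = (a₀ : ℚ_[p]) / (a₁ : ℚ_[p]))) ∧
    (∀ a₂ : ℤ_[p], IsUnit a₂ →
      ∃ x₀ x₁ x₂ w : ℚ_[p], (x₀, x₁, x₂, w) ≠ (0, 0, 0, 0) ∧
        (a₀ : ℚ_[p]) * x₀ ^ 4 + (a₁ : ℚ_[p]) * x₁ ^ 4 + (a₂ : ℚ_[p]) * x₂ ^ 4 = w ^ 2) := by
  obtain ⟨s, hsu, hs⟩ := hsq
  obtain ⟨t, ht⟩ := aux_sqrt p hp s hsu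
  have ht4 : t ^ 4 = s ^ 2 := by
    rcases ht with h | h
    · rw [show (4:ℕ) = 2*2 by rfl, pow_mul, h]
    · rw [show (4:ℕ) = 2*2 by rfl, pow_mul, h, neg_pow]
      ring
  have ha1 : (a₁ : ℚ_[p]) ≠ 0 := by
    rw [PadicInt.coe_ne_zero]
    exact h1.ne_zero
  have hsQ : (s : ℚ_[p]) ^ 2 * (a₁ : ℚ_[p]) = -(a₀ : ℚ_[p]) := by
    exact_mod_cast congrArg (fun x : ℤ_[p] => (x : ℚ_[p])) hs
  have key : ((t : ℚ_[p])) ^ 4 = -(a₀ : ℚ_[p]) / (a₁ : ℚ_[p]) := by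
    have h4 := congrArg (fun x : ℤ_[p] => (x : ℚ_[p])) ht4
    push_cast at h4
    rw [h4, eq_div_iff ha1]
    exact hsQ
  refine ⟨Or.inl ⟨(t : ℚ_[p]), key⟩, fun a₂ _ => ?_⟩
  refine ⟨1, (t : ℚ_[p]), 0, 0, by simp, ?_⟩
  rw [key]
  field_simp
  ring
end

section
/- Let p be an odd prime and a₀,a₁,a₂,y₀,y₁,y₂,y₃ ∈ ℤ_p with a₀y₀²+a₁y₁²+a₂y₂² = y₃². Let u₀ ∈ ℤ_p and u₁,u₂ ∈ ℤ_p^×, and suppose a₀,a₁,a₂ ∈ ℤ_p^×. Say the data is 'normalised' if aₙyₙ ∈ ℤ_p for n ∈ {0,1,2} and y₃ ∈ ℤ_p, with at least one of a₀y₀, a₁y₁, a₂y₂, −y₃ a unit. Then (a₀,a₁,a₂; y) is normalised if and only if (a₀u₀², a₁u₁², a₂u₂²; u₀y₀, u₁y₁, u₂y₂, y₃) is normalised. -/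
/-- `p`-normalisation of the data `(a₀,a₁,a₂; y₀,y₁,y₂,y₃)`:
at least one of `a₀y₀, a₁y₁, a₂y₂, −y₃` is a `p`-adic unit. -/
def IsNormalised {p : ℕ} [Fact p.Prime] (a₀ a₁ a₂ y₀ y₁ y₂ y₃ : ℤ_[p]) : Prop :=
  IsUnit (a₀ * y₀) ∨ IsUnit (a₁ * y₁) ∨ IsUnit (a₂ * y₂) ∨ IsUnit (-y₃)

lemma stmt14_key {p : ℕ} [Fact p.Prime] {a₀ a₁ a₂ y₀ y₁ y₂ y₃ : ℤ_[p]}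
    (hq : a₀ * y₀ ^ 2 + a₁ * y₁ ^ 2 + a₂ * y₂ ^ 2 = y₃ ^ 2)
    (ha₀ : IsUnit a₀) (h0 : IsUnit y₀)
    (h1 : ¬IsUnit y₁) (h2 : ¬IsUnit y₂) (h3 : ¬IsUnit y₃) : False := by
  rw [PadicInt.isUnit_iff] at ha₀ h0 h1 h2 h3
  have n1 : ‖y₁‖ < 1 := lt_of_le_of_ne y₁.norm_le_one h1
  have n2 : ‖y₂‖ < 1 := lt_of_le_of_ne y₂.norm_le_one h2
  have n3 : ‖y₃‖ < 1 := lt_of_le_of_ne y₃.norm_le_one h3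
  have e : a₀ * y₀ ^ 2 = y₃ ^ 2 + ((-a₁) * y₁ ^ 2 + (-a₂) * y₂ ^ 2) := by
    linear_combination hq
  have hone : ‖a₀ * y₀ ^ 2‖ = 1 := by
    rw [norm_mul, norm_pow, ha₀, h0]; norm_num
  have hlt : ‖a₀ * y₀ ^ 2‖ < 1 := by
    rw [e]
    refine lt_of_le_of_lt (PadicInt.nonarchimedean _ _) (max_lt ?_ ?_)
    · rw [norm_pow]
      exact pow_lt_one₀ (norm_nonneg _) n3 two_ne_zero
    · refine lt_of_le_of_lt (PadicInt.nonarchimedean _ _) (max_lt ?_ ?_)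
      · rw [norm_mul, norm_pow]
        calc ‖-a₁‖ * ‖y₁‖ ^ 2 ≤ 1 * ‖y₁‖ ^ 2 := by
              gcongr; exact (-a₁).norm_le_one
          _ < 1 := by
              rw [one_mul]; exact pow_lt_one₀ (norm_nonneg _) n1 two_ne_zero
      · rw [norm_mul, norm_pow]
        calc ‖-a₂‖ * ‖y₂‖ ^ 2 ≤ 1 * ‖y₂‖ ^ 2 := by
              gcongr; exact (-a₂).norm_le_one
          _ < 1 := by
              rw [one_mul]; exact pow_lt_one₀ (norm_nonneg _) n2 two_ne_zero
  exact absurd hone hlt.ne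

/-- for an odd prime `p`, units `a₀,a₁,a₂ ∈ ℤ_p^×`, a solution of the
quadric `a₀y₀²+a₁y₁²+a₂y₂² = y₃²`, `u₀ ∈ ℤ_p` and units `u₁,u₂ ∈ ℤ_p^×`, the data
`(a₀,a₁,a₂; y)` is normalised iff `(a₀u₀², a₁u₁², a₂u₂²; u₀y₀, u₁y₁, u₂y₂, y₃)`
is normalised. -/
theorem stmt14 (p : ℕ) [Fact p.Prime] (hp2 : p ≠ 2)
    (a₀ a₁ a₂ y₀ y₁ y₂ y₃ u₀ u₁ u₂ : ℤ_[p])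
    (hq : a₀ * y₀ ^ 2 + a₁ * y₁ ^ 2 + a₂ * y₂ ^ 2 = y₃ ^ 2)
    (ha₀ : IsUnit a₀) (ha₁ : IsUnit a₁) (ha₂ : IsUnit a₂)
    (hu₁ : IsUnit u₁) (hu₂ : IsUnit u₂) :
    IsNormalised a₀ a₁ a₂ y₀ y₁ y₂ y₃ ↔
      IsNormalised (a₀ * u₀ ^ 2) (a₁ * u₁ ^ 2) (a₂ * u₂ ^ 2)
        (u₀ * y₀) (u₁ * y₁) (u₂ * y₂) y₃ := by
  simp only [IsNormalised, IsUnit.mul_iff, IsUnit.neg_iff, isUnit_pow_iff (two_ne_zero),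
    ha₀, ha₁, ha₂, hu₁, hu₂, true_and]
  constructor
  · rintro (h0 | h1 | h2 | h3)
    · by_cases h1 : IsUnit y₁
      · exact Or.inr (Or.inl h1)
      by_cases h2 : IsUnit y₂
      · exact Or.inr (Or.inr (Or.inl h2))
      by_cases h3 : IsUnit y₃
      · exact Or.inr (Or.inr (Or.inr h3))
      exact absurd (stmt14_key hq ha₀ h0 h1 h2 h3) not_false
    · exact Or.inr (Or.inl h1)
    · exact Or.inr (Or.inr (Or.inl h2))
    · exact Or.inr (Or.inr (Or.inr h3))
  · rintro (⟨-, h0⟩ | h1 | h2 | h3)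
    · exact Or.inl h0.2
    · exact Or.inr (Or.inl h1)
    · exact Or.inr (Or.inr (Or.inl h2))
    · exact Or.inr (Or.inr (Or.inr h3))
end
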